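/- arXiv:1204.1408 — 2 statements merged into one kernel-verified Lean document; each statement's English description precedes it below -/
import Mathlib

section
/- Let n ≥ 4 and let V be a real inner product space of dimension l with 3 ≤ l ≤ n. Let B, B̄ be symmetric bilinear forms on V whose associated tensors S_ijkl = B_ik B_jl − B_il B_jk + (1/(n−2)) Σ_m (δ_ik B_jm B_ml + δ_jl B_im B_mk − δ_il B_jm B_mk − δ_jk B_im B_ml) (indices ranging 1..l) coincide: S = S̄. Then there exists an orthonormal basis of V in which B̄ is diagonal and at least one off-diagonal entry of the matrix of B vanishes. -/
open Matrix BigOperators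

/-- The Weyl-tensor-like tensor associated to `B` on an `l`-dimensional space,
with the factor `1/(n−2)` (indices ranging over `Fin l`). -/
noncomputable def mobiusS (n l : ℕ) (B : Matrix (Fin l) (Fin l) ℝ)
    (i j k m : Fin l) : ℝ :=
  B i k * B j m - B i m * B j k +
    (1 / ((n : ℝ) - 2)) * ∑ r : Fin l,
      ((if i = k then (1 : ℝ) else 0) * (B j r * B r m)
        + (if j = m then (1 : ℝ) else 0) * (B i r * B r k)
        - (if i = m then (1 : ℝ) else 0) * (B j r * B r k)
        - (if j = k then (1 : ℝ) else 0) * (B i r * B r m))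

/-!
Diagonalise `B̄ = diag d` by an orthogonal `P`. The tensor `S` is natural under orthogonal
changes of basis, so `A := P B Pᵀ` satisfies `S(A) = S(diag d)`.

If two eigenvalues coincide, `d a = d b`, a Householder reflection in the plane of `e_a, e_b`
fixes `diag d`, and by the intermediate value theorem it can be chosen to kill `A a b`.

If the `d i` are distinct and no off-diagonal entry of `A` vanishes, the components of
`S(A) = S(diag d)` with four distinct indices make `A i j * A i m / A j m` independent of `j, m`,
say `g i`; then `A i j ^ 2 = g i * g j`, and the components `S_ijim` make `A i i - g i = c`
constant. The components `S_ijij` now read `(n - 2) d_i d_j + d_i² + d_j² = n c²` for all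
`i ≠ j`, which forces two of any three `d`'s to agree since `n ≠ 3`.
-/

open Finset

section KulkarniNomizu

variable {ι : Type*} [Fintype ι]

lemma mul_mul_transpose_apply (P X : Matrix ι ι ℝ) (i k : ι) :
    (P * X * Pᵀ) i k = ∑ a, ∑ c, P i a * P k c * X a c := by
  simp only [mul_apply, transpose_apply, sum_mul]
  rw [sum_comm]
  exact sum_congr rfl fun _ _ => sum_congr rfl fun _ _ => by ring

lemma mul_mul_transpose_apply_mul_apply (P X Y : Matrix ι ι ℝ) (i j k m : ι) :
    (P * X * Pᵀ) i k * (P * Y * Pᵀ) j m =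
      ∑ a, ∑ b, ∑ c, ∑ d, P i a * P j b * P k c * P m d * (X a c * Y b d) := by
  simp only [mul_mul_transpose_apply, sum_mul_sum]
  exact sum_congr rfl fun _ _ => sum_congr rfl fun _ _ =>
    sum_congr rfl fun _ _ => sum_congr rfl fun _ _ => by ring

def kulkarniNomizu (X Y : Matrix ι ι ℝ) (i j k m : ι) : ℝ :=
  X i k * Y j m + Y i k * X j m - X i m * Y j k - Y i m * X j k

lemma kulkarniNomizu_mul_mul_transpose (P X Y : Matrix ι ι ℝ) (i j k m : ι) :
    kulkarniNomizu (P * X * Pᵀ) (P * Y * Pᵀ) i j k m =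
      ∑ a, ∑ b, ∑ c, ∑ d, P i a * P j b * P k c * P m d * kulkarniNomizu X Y a b c d := by
  have swap : ∀ (U W : Matrix ι ι ℝ), (P * U * Pᵀ) i m * (P * W * Pᵀ) j k =
      ∑ a, ∑ b, ∑ c, ∑ d, P i a * P j b * P k c * P m d * (U a d * W b c) := fun U W => by
    rw [mul_mul_transpose_apply_mul_apply]
    refine sum_congr rfl fun a _ => sum_congr rfl fun b _ => ?_
    rw [sum_comm]
    exact sum_congr rfl fun _ _ => sum_congr rfl fun _ _ => by ring
  simp only [kulkarniNomizu, mul_mul_transpose_apply_mul_apply, swap, mul_sub, mul_add,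
    sum_add_distrib, sum_sub_distrib]

end KulkarniNomizu

lemma mobiusS_eq_kulkarniNomizu (n l : ℕ) (M : Matrix (Fin l) (Fin l) ℝ) (i j k m : Fin l) :
    mobiusS n l M i j k m =
      kulkarniNomizu M M i j k m / 2 + kulkarniNomizu 1 (M * M) i j k m / ((n : ℝ) - 2) := by
  simp only [mobiusS, kulkarniNomizu, one_apply, mul_apply, sum_add_distrib,
    sum_sub_distrib, ite_mul, one_mul, zero_mul, sum_ite_irrel, sum_const_zero]
  split_ifs <;> ring

lemma mobiusS_mul_mul_transpose (n l : ℕ) {P : Matrix (Fin l) (Fin l) ℝ} (hP : Pᵀ * P = 1)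
    (M : Matrix (Fin l) (Fin l) ℝ) (i j k m : Fin l) :
    mobiusS n l (P * M * Pᵀ) i j k m =
      ∑ a, ∑ b, ∑ c, ∑ d, P i a * P j b * P k c * P m d * mobiusS n l M a b c d := by
  have hsq : P * M * Pᵀ * (P * M * Pᵀ) = P * (M * M) * Pᵀ := by
    simp only [Matrix.mul_assoc, ← Matrix.mul_assoc Pᵀ, hP, Matrix.one_mul]
  have hone : (1 : Matrix (Fin l) (Fin l) ℝ) = P * 1 * Pᵀ := by
    rw [Matrix.mul_one, mul_eq_one_comm.mp hP]
  simp only [mobiusS_eq_kulkarniNomizu, hsq]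
  rw [hone, kulkarniNomizu_mul_mul_transpose, kulkarniNomizu_mul_mul_transpose, ← hone]
  simp only [mul_add, sum_add_distrib, mul_div_assoc', sum_div]

lemma Matrix.IsSymm.mul_mul_transpose {ι : Type*} [Fintype ι] {M : Matrix ι ι ℝ}
    (hM : M.IsSymm) (P : Matrix ι ι ℝ) : (P * M * Pᵀ).IsSymm := by
  simp [IsSymm, transpose_mul, hM.eq, Matrix.mul_assoc]

lemma Matrix.IsSymm.exists_orthogonal_conj_eq_diagonal {ι : Type*} [Fintype ι] [DecidableEq ι]
    {M : Matrix ι ι ℝ} (hM : M.IsSymm) :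
    ∃ P : Matrix ι ι ℝ, Pᵀ * P = 1 ∧ ∃ d, P * M * Pᵀ = diagonal d := by
  have hH : M.IsHermitian := by
    rw [IsHermitian, conjTranspose_eq_transpose_of_trivial]; exact hM
  have hstar : star (hH.eigenvectorUnitary : Matrix ι ι ℝ) =
      (hH.eigenvectorUnitary : Matrix ι ι ℝ)ᵀ := by
    rw [star_eq_conjTranspose, conjTranspose_eq_transpose_of_trivial]
  refine ⟨(hH.eigenvectorUnitary : Matrix ι ι ℝ)ᵀ, ?_, hH.eigenvalues, ?_⟩
  · rw [transpose_transpose, ← hstar]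
    exact mem_unitaryGroup_iff.mp hH.eigenvectorUnitary.2
  · have := hH.conjStarAlgAut_star_eigenvectorUnitary
    simp only [Unitary.conjStarAlgAut_star_apply] at this
    rw [transpose_transpose, ← hstar, this]
    rfl

section Householder

variable {ι : Type*} [Fintype ι] [DecidableEq ι]

noncomputable def householder (v : ι → ℝ) : Matrix ι ι ℝ :=
  1 - (2 / (v ⬝ᵥ v)) • vecMulVec v v

lemma householder_isSymm (v : ι → ℝ) : (householder v).IsSymm := by
  simp [householder, IsSymm, transpose_vecMulVec]

lemma householder_mul_self {v : ι → ℝ} (hv : v ⬝ᵥ v ≠ 0) :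
    householder v * householder v = 1 := by
  have h : 2 / v ⬝ᵥ v * (2 / v ⬝ᵥ v) * v ⬝ᵥ v = 2 / v ⬝ᵥ v + 2 / v ⬝ᵥ v := by
    field_simp; ring
  simp only [householder, sub_mul, mul_sub, one_mul, mul_one, smul_mul_smul_comm,
    vecMulVec_mul_vecMulVec, vecMulVec_smul, smul_smul, h, add_smul]
  abel

lemma commute_diagonal_householder {d v : ι → ℝ} {c : ℝ} (h : ∀ k, d k * v k = c * v k) :
    Commute (diagonal d) (householder v) := by
  have hmul : diagonal d *ᵥ v = c • v := funext fun k => by simp [mulVec_diagonal, h]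
  have hvec : v ᵥ* diagonal d = c • v := funext fun k => by simp [vecMul_diagonal, mul_comm, h]
  refine (Commute.one_right _).sub_right (Commute.smul_right ?_ _)
  rw [Commute, SemiconjBy, mul_vecMulVec, vecMulVec_mul, hmul, hvec, smul_vecMulVec,
    vecMulVec_smul]

lemma exists_orthogonal_fix_diagonal_apply_eq_zero {A : Matrix ι ι ℝ} (hA : A.IsSymm)
    {d : ι → ℝ} {i j : ι} (hij : i ≠ j) (hd : d i = d j) :
    ∃ R : Matrix ι ι ℝ, Rᵀ * R = 1 ∧ R * diagonal d * Rᵀ = diagonal d ∧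
      (R * A * Rᵀ) i j = 0 := by
  set v : ℝ → ι → ℝ := fun t => Pi.single i 1 + t • Pi.single j 1
  have hv : ∀ t, v t ⬝ᵥ v t ≠ 0 := fun t h => by
    simpa [v, hij] using congrFun (dotProduct_self_eq_zero.mp h) i
  set f : ℝ → ℝ := fun t => (householder (v t) * A * householder (v t)) i j
  have hf : Continuous f := by
    simp only [f, householder]
    fun_prop (disch := exact hv _)
  have hf0 : f 0 = -A i j := by
    simp only [f, v, householder, dotProduct_add, dotProduct_single, Pi.add_apply,
      Pi.single_eq_same, Pi.smul_apply, ne_eq, Ne.symm hij, not_false_eq_true, Pi.single_eq_of_ne',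
      smul_eq_mul, mul_zero, add_zero, mul_one, dotProduct_smul, Pi.single_eq_of_ne, zero_add,
      sub_mul, one_mul, Algebra.smul_mul_assoc, vecMulVec_mul, mul_sub, Algebra.mul_smul_comm,
      mul_vecMulVec, Matrix.sub_apply, Matrix.smul_apply, vecMulVec_apply, div_one, zero_smul,
      single_vecMul, row_apply, mulVec_single, MulOpposite.op_one, col_apply, one_smul, sub_self,
      sub_zero]
    ring
  have hf1 : f 1 = A i j := by
    simp only [f, v, householder, dotProduct_add, dotProduct_single, Pi.add_apply,
      Pi.single_eq_same, Pi.smul_apply, ne_eq, hij, not_false_eq_true, Pi.single_eq_of_ne,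
      smul_eq_mul, mul_zero, add_zero, mul_one, dotProduct_smul, Ne.symm hij, zero_add, sub_mul,
      one_mul, Algebra.smul_mul_assoc, vecMulVec_mul, add_vecMul, single_vecMul, one_smul, mul_sub,
      Algebra.mul_smul_comm, mul_vecMulVec, mulVec_add, mulVec_single, MulOpposite.op_one,
      Matrix.sub_apply, Matrix.smul_apply, vecMulVec_apply, row_apply, col_apply, hA.apply i j,
      smul_add]
    ring
  obtain ⟨t, -, ht⟩ : ∃ t ∈ Set.uIcc 0 1, f t = 0 := intermediate_value_uIcc hf.continuousOn
    (by rw [hf0, hf1]; rcases le_total (A i j) 0 with h | h <;> simp [h])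
  have hH := householder_isSymm (v t)
  refine ⟨householder (v t), ?_, ?_, ?_⟩
  · rw [hH.eq, householder_mul_self (hv t)]
  · have hc : ∀ k, d k * v t k = d i * v t k := fun k => by
      rcases eq_or_ne k i with rfl | hki
      · rfl
      rcases eq_or_ne k j with rfl | hkj
      · rw [hd]
      · simp [v, hki, hkj]
    rw [hH.eq, Matrix.mul_assoc, (commute_diagonal_householder hc).eq, ← Matrix.mul_assoc,
      householder_mul_self (hv t), Matrix.one_mul]
  · rw [hH.eq]; exact ht

end Householder

section Combinatorics

lemma exists_ne_ne_of_three_le_card {ι : Type*} [Fintype ι] [DecidableEq ι]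
    (h : 3 ≤ Fintype.card ι) (i j : ι) : ∃ m, m ≠ i ∧ m ≠ j := by
  obtain ⟨m, hm⟩ : ((univ.erase i).erase j).Nonempty := by
    rw [← card_pos]
    have h1 := pred_card_le_card_erase (s := univ) (a := i)
    have h2 := pred_card_le_card_erase (s := univ.erase i) (a := j)
    rw [card_univ] at h1
    omega
  exact ⟨m, (mem_erase.mp (mem_erase.mp hm).2).1, (mem_erase.mp hm).1⟩

lemma apply_eq_apply_of_symm {α β : Type*} {s : Set α} {f : α → α → β}
    (hsymm : ∀ a b, f a b = f b a)
    (hstep : ∀ a ∈ s, ∀ b ∈ s, ∀ c ∈ s, a ≠ b → a ≠ c → b ≠ c →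
      f a b = f a c)
    {a b a' b' : α} (ha : a ∈ s) (hb : b ∈ s) (ha' : a' ∈ s) (hb' : b' ∈ s)
    (hab : a ≠ b) (hab' : a' ≠ b') : f a b = f a' b' := by
  have hstep' : ∀ x ∈ s, ∀ y ∈ s, ∀ z ∈ s, x ≠ y → x ≠ z → f x y = f x z := by
    intro x hx y hy z hz hxy hxz
    rcases eq_or_ne y z with rfl | hyz
    · rfl
    · exact hstep x hx y hy z hz hxy hxz hyz
  rcases eq_or_ne a' a with rfl | ha'a
  · exact hstep' a' ha' b hb b' hb' hab hab'
  calc f a b = f a a' := hstep' a ha b hb a' ha' hab (Ne.symm ha'a)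
    _ = f a' a := hsymm a a'
    _ = f a' b' := hstep' a' ha' a ha b' hb' ha'a hab'

end Combinatorics

section OffDiagonalRatios

variable {ι : Type*} [Fintype ι] [DecidableEq ι] {A : Matrix ι ι ℝ}

lemma exists_offDiag_mul_eq_mul (h3 : 3 ≤ Fintype.card ι) (hA : A.IsSymm)
    (hA0 : ∀ i j, i ≠ j → A i j ≠ 0)
    (hG : ∀ i j k m, i ≠ k → i ≠ m → j ≠ k → j ≠ m →
      A i k * A j m = A i m * A j k) :
    ∃ g : ι → ℝ, ∀ i j m, i ≠ j → i ≠ m → j ≠ m →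
      A i j * A i m = g i * A j m := by
  have hpair : ∀ i, ∃ j m, j ≠ i ∧ m ≠ i ∧ j ≠ m := fun i => by
    obtain ⟨j, hj, -⟩ := exists_ne_ne_of_three_le_card h3 i i
    obtain ⟨m, hmi, hmj⟩ := exists_ne_ne_of_three_le_card h3 i j
    exact ⟨j, m, hj, hmi, Ne.symm hmj⟩
  choose j₀ m₀ hj₀ hm₀ hjm₀ using hpair
  refine ⟨fun i => A i (j₀ i) * A i (m₀ i) / A (j₀ i) (m₀ i),
    fun i j m hij him hjm => ?_⟩
  have hratio := apply_eq_apply_of_symm (s := {i}ᶜ) (f := fun j m => A i j * A i m / A j m)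
    (fun a b => by rw [mul_comm, hA.apply a b])
    (fun a _ b hb c hc hab hac _ => by
      rw [div_eq_div_iff (hA0 a b hab) (hA0 a c hac)]
      linear_combination A i a * hG i a b c (Ne.symm hb) (Ne.symm hc) hab hac)
    (Ne.symm hij) (Ne.symm him) (hj₀ i) (hm₀ i) hjm (hjm₀ i)
  dsimp only
  rw [← hratio, div_mul_cancel₀ _ (hA0 j m hjm)]

variable {g : ι → ℝ}

lemma sq_eq_mul_of_offDiag_mul_eq_mul (h3 : 3 ≤ Fintype.card ι) (hA : A.IsSymm)
    (hA0 : ∀ i j, i ≠ j → A i j ≠ 0)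
    (hg : ∀ i j m, i ≠ j → i ≠ m → j ≠ m → A i j * A i m = g i * A j m)
    {i j : ι} (hij : i ≠ j) : A i j ^ 2 = g i * g j := by
  obtain ⟨m, hmi, hmj⟩ := exists_ne_ne_of_three_le_card h3 i j
  have hi := hg i j m hij (Ne.symm hmi) (Ne.symm hmj)
  have hj := hg j i m (Ne.symm hij) (Ne.symm hmj) (Ne.symm hmi)
  rw [hA.apply] at hj
  have : (A i j ^ 2 - g i * g j) * (A i m * A j m) = 0 := by
    linear_combination (A i j * A j m) * hi + (g i * A j m) * hj
  have hne : A i m * A j m ≠ 0 := mul_ne_zero (hA0 i m (Ne.symm hmi)) (hA0 j m (Ne.symm hmj))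
  linear_combination (mul_eq_zero.mp this).resolve_right hne

lemma mul_self_apply_of_ne (hA : A.IsSymm)
    (hg : ∀ i j m, i ≠ j → i ≠ m → j ≠ m → A i j * A i m = g i * A j m)
    {j m : ι} (hjm : j ≠ m) :
    (A * A) j m = (A j j - g j + (A m m - g m) + ∑ r, g r) * A j m := by
  have hr : ∀ r, A j r * A r m = g r * A j m + ((if r = j then (A j j - g j) * A j m else 0)
      + (if r = m then (A m m - g m) * A j m else 0)) := fun r => by
    rcases eq_or_ne r j with rfl | hrj
    · rw [if_pos rfl, if_neg hjm]; ring
    rcases eq_or_ne r m with rfl | hrm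
    · rw [if_neg hrj, if_pos rfl]; ring
    rw [if_neg hrj, if_neg hrm, ← hA.apply, hg r j m hrj hrm hjm]
    ring
  simp only [mul_apply, hr, sum_add_distrib, sum_ite_eq', mem_univ, if_true, ← sum_mul]
  ring

lemma mul_self_apply_self (hA : A.IsSymm) (hsq : ∀ i j, i ≠ j → A i j ^ 2 = g i * g j)
    (i : ι) : (A * A) i i = A i i ^ 2 + g i * (∑ r, g r - g i) := by
  have hr : ∀ r, A i r * A r i = g i * g r + if r = i then A i i ^ 2 - g i * g i else 0 :=
    fun r => by
      rcases eq_or_ne r i with rfl | hri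
      · rw [if_pos rfl]; ring
      · rw [if_neg hri, ← hA.apply r i, ← sq, hsq i r (Ne.symm hri)]; ring
  simp only [mul_apply, hr, sum_add_distrib, sum_ite_eq', mem_univ, if_true, ← mul_sum]
  ring

end OffDiagonalRatios

lemma eq_or_eq_or_eq_of_quadratic_eq {κ K x y z : ℝ} (hκ : κ ≠ 1)
    (hxy : κ * (x * y) + (x ^ 2 + y ^ 2) = K) (hxz : κ * (x * z) + (x ^ 2 + z ^ 2) = K)
    (hyz : κ * (y * z) + (y ^ 2 + z ^ 2) = K) : x = y ∨ x = z ∨ y = z := by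
  by_contra! h
  obtain ⟨hxy', hxz', hyz'⟩ := h
  have hx : κ * x + y + z = 0 := by
    have : (y - z) * (κ * x + y + z) = 0 := by linear_combination hxy - hxz
    exact (mul_eq_zero.mp this).resolve_left (sub_ne_zero.mpr hyz')
  have hy : κ * y + x + z = 0 := by
    have : (x - z) * (κ * y + x + z) = 0 := by linear_combination hxy - hyz
    exact (mul_eq_zero.mp this).resolve_left (sub_ne_zero.mpr hxz')
  have : (κ - 1) * (x - y) = 0 := by linear_combination hx - hy
  exact hxy' (sub_eq_zero.mp ((mul_eq_zero.mp this).resolve_left (sub_ne_zero.mpr hκ)))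

section DiagonalDefect

variable {ι : Type*} [Fintype ι] [DecidableEq ι] {A : Matrix ι ι ℝ} {g : ι → ℝ}

lemma exists_diag_eq_add_const {κ : ℝ} (hκ : κ ≠ 1) (h3 : 3 ≤ Fintype.card ι)
    (hA : A.IsSymm) (hA0 : ∀ i j, i ≠ j → A i j ≠ 0)
    (hg : ∀ i j m, i ≠ j → i ≠ m → j ≠ m → A i j * A i m = g i * A j m)
    (hE : ∀ i j m, i ≠ j → i ≠ m → j ≠ m →
      κ * (A i i * A j m - A i j * A i m) + (A * A) j m = 0) :
    ∃ c, (∀ i, A i i = g i + c) ∧ ∑ r, g r = -(κ + 2) * c := by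
  have hlin : ∀ i j m, i ≠ j → i ≠ m → j ≠ m →
      κ * (A i i - g i) + (A j j - g j) + (A m m - g m) + ∑ r, g r = 0 := by
    intro i j m hij him hjm
    have h := hE i j m hij him hjm
    rw [mul_self_apply_of_ne hA hg hjm, hg i j m hij him hjm] at h
    exact mul_right_cancel₀ (hA0 j m hjm) (by linear_combination h)
  have hconst : ∀ i j, i ≠ j → A i i - g i = A j j - g j := by
    intro i j hij
    obtain ⟨m, hmi, hmj⟩ := exists_ne_ne_of_three_le_card h3 i j
    have : (κ - 1) * ((A i i - g i) - (A j j - g j)) = 0 := by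
      linear_combination hlin i j m hij (Ne.symm hmi) (Ne.symm hmj)
        - hlin j i m (Ne.symm hij) (Ne.symm hmj) (Ne.symm hmi)
    exact sub_eq_zero.mp ((mul_eq_zero.mp this).resolve_left (sub_ne_zero.mpr hκ))
  obtain ⟨i, j, m, hij, him, hjm⟩ := Fintype.two_lt_card_iff.mp h3
  refine ⟨A i i - g i, fun k => ?_, ?_⟩
  · rcases eq_or_ne k i with rfl | hki
    · ring
    · linear_combination hconst k i hki
  · linear_combination hlin i j m hij him hjm + hconst i j hij + hconst i m him

end DiagonalDefect

lemma not_injective_of_offDiag_ne_zero {ι : Type*} [Fintype ι] [DecidableEq ι]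
    {A : Matrix ι ι ℝ} {d : ι → ℝ} {κ : ℝ} (hκ : κ ≠ 1) (h3 : 3 ≤ Fintype.card ι)
    (hA : A.IsSymm) (hA0 : ∀ i j, i ≠ j → A i j ≠ 0)
    (hE : ∀ i j m, i ≠ j → i ≠ m → j ≠ m →
      κ * (A i i * A j m - A i j * A i m) + (A * A) j m = 0)
    (hG : ∀ i j k m, i ≠ k → i ≠ m → j ≠ k → j ≠ m →
      A i k * A j m = A i m * A j k)
    (hH : ∀ i j, i ≠ j → κ * (A i i * A j j - A i j ^ 2) + ((A * A) i i + (A * A) j j) =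
      κ * (d i * d j) + (d i ^ 2 + d j ^ 2)) :
    ¬ Function.Injective d := by
  obtain ⟨g, hg⟩ := exists_offDiag_mul_eq_mul h3 hA hA0 hG
  have hsq := fun i j (hij : i ≠ j) => sq_eq_mul_of_offDiag_mul_eq_mul h3 hA hA0 hg hij
  obtain ⟨c, hc, hsum⟩ := exists_diag_eq_add_const hκ h3 hA hA0 hg hE
  have hd : ∀ i j, i ≠ j → κ * (d i * d j) + (d i ^ 2 + d j ^ 2) = (κ + 2) * c ^ 2 := by
    intro i j hij
    rw [← hH i j hij, mul_self_apply_self hA hsq, mul_self_apply_self hA hsq, hsq i j hij,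
      hc i, hc j, hsum]
    ring
  obtain ⟨i, j, m, hij, him, hjm⟩ := Fintype.two_lt_card_iff.mp h3
  intro hinj
  rcases eq_or_eq_or_eq_of_quadratic_eq hκ (hd i j hij) (hd i m him) (hd j m hjm) with h | h | h
  exacts [hij (hinj h), him (hinj h), hjm (hinj h)]

section DiagonalTensor

variable {n l : ℕ} {A : Matrix (Fin l) (Fin l) ℝ} {d : Fin l → ℝ}

lemma mobiusS_eq_diagonal_triple (hn : (n : ℝ) - 2 ≠ 0) (hA : A.IsSymm)
    {i j m : Fin l} (h : mobiusS n l A i j i m = mobiusS n l (diagonal d) i j i m)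
    (hij : i ≠ j) (him : i ≠ m) (hjm : j ≠ m) :
    ((n : ℝ) - 2) * (A i i * A j m - A i j * A i m) + (A * A) j m = 0 := by
  simp only [mobiusS_eq_kulkarniNomizu, kulkarniNomizu, diagonal_mul_diagonal, one_apply,
    diagonal_apply, him, hjm, Ne.symm hij, if_true, if_false, hA.apply i j] at h
  field_simp at h
  linear_combination h / 2

lemma mobiusS_eq_diagonal_quadruple {i j k m : Fin l}
    (h : mobiusS n l A i j k m = mobiusS n l (diagonal d) i j k m)
    (hik : i ≠ k) (him : i ≠ m) (hjk : j ≠ k) (hjm : j ≠ m) :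
    A i k * A j m = A i m * A j k := by
  simp only [mobiusS_eq_kulkarniNomizu, kulkarniNomizu, diagonal_mul_diagonal, one_apply,
    diagonal_apply, hik, him, hjk, hjm, if_false] at h
  linear_combination h

lemma mobiusS_eq_diagonal_pair (hn : (n : ℝ) - 2 ≠ 0) (hA : A.IsSymm)
    {i j : Fin l} (h : mobiusS n l A i j i j = mobiusS n l (diagonal d) i j i j) (hij : i ≠ j) :
    ((n : ℝ) - 2) * (A i i * A j j - A i j ^ 2) + ((A * A) i i + (A * A) j j) =
      ((n : ℝ) - 2) * (d i * d j) + (d i ^ 2 + d j ^ 2) := by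
  simp only [mobiusS_eq_kulkarniNomizu, kulkarniNomizu, diagonal_mul_diagonal, one_apply,
    diagonal_apply, hij, Ne.symm hij, if_true, if_false, hA.apply i j] at h
  field_simp at h
  linear_combination h / 2

end DiagonalTensor

lemma not_injective_of_mobiusS_eq_diagonal {n l : ℕ} (hn : 4 ≤ n) (hl : 3 ≤ l)
    {A : Matrix (Fin l) (Fin l) ℝ} (hA : A.IsSymm) {d : Fin l → ℝ}
    (hS : ∀ i j k m, mobiusS n l A i j k m = mobiusS n l (diagonal d) i j k m)
    (hA0 : ∀ i j, i ≠ j → A i j ≠ 0) : ¬ Function.Injective d := by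
  have hn' : (4 : ℝ) ≤ n := by exact_mod_cast hn
  have hn2 : (n : ℝ) - 2 ≠ 0 := by linarith
  exact not_injective_of_offDiag_ne_zero (κ := (n : ℝ) - 2) (by linarith)
    (by rwa [Fintype.card_fin]) hA hA0
    (fun i j m hij him hjm => mobiusS_eq_diagonal_triple hn2 hA (hS i j i m) hij him hjm)
    (fun i j k m hik him hjk hjm => mobiusS_eq_diagonal_quadruple (hS i j k m) hik him hjk hjm)
    (fun i j hij => mobiusS_eq_diagonal_pair hn2 hA (hS i j i j) hij)

theorem stmt1_general (n l : ℕ) (hn : 4 ≤ n) (hl : 3 ≤ l)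
    (B Bb : Matrix (Fin l) (Fin l) ℝ) (hB : B.IsSymm) (hBb : Bb.IsSymm)
    (hS : ∀ i j k m, mobiusS n l B i j k m = mobiusS n l Bb i j k m) :
    ∃ P : Matrix (Fin l) (Fin l) ℝ, Pᵀ * P = 1 ∧ (P * Bb * Pᵀ).IsDiag ∧
      ∃ i j : Fin l, i ≠ j ∧ (P * B * Pᵀ) i j = 0 := by
  obtain ⟨P, hP, d, hd⟩ := hBb.exists_orthogonal_conj_eq_diagonal
  have hSP : ∀ i j k m,
      mobiusS n l (P * B * Pᵀ) i j k m = mobiusS n l (diagonal d) i j k m := by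
    intro i j k m
    simp only [← hd, mobiusS_mul_mul_transpose n l hP, hS]
  by_cases hinj : Function.Injective d
  · refine ⟨P, hP, hd ▸ isDiag_diagonal d, ?_⟩
    by_contra! hA0
    exact not_injective_of_mobiusS_eq_diagonal hn hl (hB.mul_mul_transpose P) hSP hA0 hinj
  obtain ⟨a, b, hdab, hab⟩ := Function.not_injective_iff.mp hinj
  obtain ⟨R, hR, hRd, hRB⟩ :=
    exists_orthogonal_fix_diagonal_apply_eq_zero (hB.mul_mul_transpose P) hab hdab
  have hconj : ∀ M, R * P * M * (R * P)ᵀ = R * (P * M * Pᵀ) * Rᵀ := fun M => by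
    simp only [transpose_mul, Matrix.mul_assoc]
  refine ⟨R * P, ?_, ?_, a, b, hab, by rwa [hconj]⟩
  · rw [transpose_mul, Matrix.mul_assoc, ← Matrix.mul_assoc Rᵀ, hR, Matrix.one_mul, hP]
  · rw [hconj, hd, hRd]
    exact isDiag_diagonal d

/-- Lemma 6.2: if symmetric bilinear forms `B`, `B̄` on an `l`-dimensional
space (`3 ≤ l ≤ n`, `n ≥ 4`) have equal associated tensors, then in some
orthonormal basis `B̄` is diagonal while some off-diagonal entry of `B`
vanishes. -/
theorem stmt1 (n l : ℕ) (hn : 4 ≤ n) (hl : 3 ≤ l) (hln : l ≤ n)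
    (B Bb : Matrix (Fin l) (Fin l) ℝ) (hB : B.IsSymm) (hBb : Bb.IsSymm)
    (hS : ∀ i j k m, mobiusS n l B i j k m = mobiusS n l Bb i j k m) :
    ∃ P : Matrix (Fin l) (Fin l) ℝ, Pᵀ * P = 1 ∧ (P * Bb * Pᵀ).IsDiag ∧
      ∃ i j : Fin l, i ≠ j ∧ (P * B * Pᵀ) i j = 0 :=
  stmt1_general n l hn hl B Bb hB hBb hS
end

section
/- Under the hypotheses of the previous lemma (S = S̄, dim V = l with 3 ≤ l ≤ n, n ≥ 4), suppose an orthonormal basis is chosen with B̄ diagonal and B_ij = 0 for some i ≠ j. Then there exists a new orthonormal basis of V in which B̄ is still diagonal and B has semi-diagonal form: all off-diagonal entries of B in the last row and last column vanish, i.e. B_il = B_li = 0 for all i < l. -/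
open Matrix BigOperators

theorem mobiusS_eq (n l : ℕ) (B : Matrix (Fin l) (Fin l) ℝ) (i j k m : Fin l) :
    mobiusS n l B i j k m = B i k * B j m - B i m * B j k + 1 / ((n : ℝ) - 2) *
      ((if i = k then (B * B) j m else 0) + (if j = m then (B * B) i k else 0)
        - (if i = m then (B * B) j k else 0) - (if j = k then (B * B) i m else 0)) := by
  simp only [mobiusS, mul_apply, Finset.sum_add_distrib, Finset.sum_sub_distrib, ← Finset.mul_sum]
  split_ifs <;> simp

/-- The components of `mobiusS n l B = mobiusS n l (diagonal d)` with two, three and four distinct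
indices, multiplied by `c = n - 2`. -/
structure MobiusRelations {ι : Type*} [Fintype ι] (c : ℝ) (B : Matrix ι ι ℝ) (d : ι → ℝ) :
    Prop where
  pair : ∀ i j, i ≠ j → c * (B i i * B j j - B i j * B j i) + (B * B) j j + (B * B) i i =
    c * (d i * d j) + d j ^ 2 + d i ^ 2
  triple : ∀ i j m, i ≠ j → i ≠ m → j ≠ m → c * (B i i * B j m - B i m * B j i) + (B * B) j m = 0
  quadruple : ∀ i j k m, i ≠ j → i ≠ k → i ≠ m → j ≠ k → j ≠ m → k ≠ m →
    B i k * B j m = B i m * B j k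

theorem mobiusRelations_of_mobiusS_eq {n l : ℕ} (hn : (n : ℝ) - 2 ≠ 0)
    {B : Matrix (Fin l) (Fin l) ℝ} {d : Fin l → ℝ}
    (hS : ∀ i j k m, mobiusS n l B i j k m = mobiusS n l (diagonal d) i j k m) :
    MobiusRelations ((n : ℝ) - 2) B d where
  pair i j hij := by
    have h := hS i j i j
    simp only [mobiusS_eq, diagonal_mul_diagonal, if_true, if_neg hij, if_neg hij.symm,
      diagonal_apply_eq, diagonal_apply_ne _ hij, diagonal_apply_ne _ hij.symm] at h
    field_simp at h
    linear_combination h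
  triple i j m hij him hjm := by
    have h := hS i j i m
    simp only [mobiusS_eq, diagonal_mul_diagonal, if_true, if_neg hij.symm, if_neg him,
      if_neg hjm, diagonal_apply_eq, diagonal_apply_ne _ hjm, diagonal_apply_ne _ hij.symm,
      diagonal_apply_ne _ him] at h
    field_simp at h
    linear_combination h
  quadruple i j k m hij hik him hjk hjm hkm := by
    have h := hS i j k m
    simp only [mobiusS_eq, if_neg hik, if_neg hjm, if_neg him, if_neg hjk,
      diagonal_apply_ne _ hik, diagonal_apply_ne _ hjm, diagonal_apply_ne _ him,
      diagonal_apply_ne _ hjk] at h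
    linear_combination h

section
variable {ι : Type*} [Fintype ι] {c : ℝ} {B : Matrix ι ι ℝ} {d : ι → ℝ} {p q : ι}

theorem MobiusRelations.trace_relation (h : MobiusRelations c B d) {j m : ι} (hjm : j ≠ m) :
    c * (trace B * B j m - (B * B) j m) + ((Fintype.card ι : ℝ) - 2) * (B * B) j m = 0 := by
  have hsum : ∑ i, (c * (B i i * B j m - B i m * B j i) + (B * B) j m) = 2 * (B * B) j m := by
    rw [Finset.sum_eq_add_of_mem j m (Finset.mem_univ _) (Finset.mem_univ _) hjm
      fun i _ hi => h.triple i j m hi.1 hi.2 hjm]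
    ring
  simp only [Finset.sum_add_distrib, ← Finset.mul_sum, Finset.sum_sub_distrib, ← Finset.sum_mul,
    Finset.sum_const, Finset.card_univ, nsmul_eq_mul] at hsum
  have htr : ∑ i, B i m * B j i = (B * B) j m := by
    simp only [mul_apply, mul_comm]
  rw [htr] at hsum
  simp only [trace, diag_apply]
  linear_combination hsum

namespace MobiusRelations
variable (h : MobiusRelations c B d) (hB : B.IsSymm) (hpq : p ≠ q) (hBpq : B p q = 0)
include h hB hpq hBpq

theorem mul_apply_eq_mul_self_apply {i : ι} (hip : i ≠ p) (hiq : i ≠ q) :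
    c * (B i p * B i q) = (B * B) p q := by
  linear_combination -h.triple i p q hip hiq hpq + c * B i i * hBpq - c * B i q * hB.apply i p

theorem apply_mul_apply_eq (hc : c ≠ 0) {k i : ι} (hkp : k ≠ p) (hip : i ≠ p) (hiq : i ≠ q)
    (hki : k ≠ i) : B k i * B k p = (B k k - B q q) * B i p := by
  refine mul_left_cancel₀ hc ?_
  linear_combination h.triple q p i hpq.symm hiq.symm hip.symm - h.triple k p i hkp hki hip.symm
    + c * B q i * hBpq - c * B k i * hB.apply k p + c * (B k k - B q q) * hB.apply i p

variable (hN : (B * B) p q ≠ 0)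
include hN

theorem apply_ne_zero {i : ι} (hip : i ≠ p) (hiq : i ≠ q) : B i p ≠ 0 ∧ B i q ≠ 0 := by
  have h' := h.mul_apply_eq_mul_self_apply hB hpq hBpq hip hiq
  exact mul_ne_zero_iff.1 (right_ne_zero_of_mul (h'.trans_ne hN))

variable (hc : c ≠ 0) {i j : ι} (hip : i ≠ p) (hiq : i ≠ q) (hjp : j ≠ p) (hjq : j ≠ q)
  (hij : i ≠ j)
include hc hip hiq hjp hjq hij

theorem apply_self_eq : B p p = B q q := by
  have hBqp : B q p = 0 := (hB.apply p q).trans hBpq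
  have h₁ := h.apply_mul_apply_eq hB hpq hBpq hc hip hjp hjq hij
  have h₂ := h.apply_mul_apply_eq hB hpq.symm hBqp hc hiq hjq hjp hij
  have h₃ := h.quadruple j i p q hij.symm hjp hjq hip hiq hpq
  have hne := mul_ne_zero (h.apply_ne_zero hB hpq hBpq hN hjp hjq).1
    (h.apply_ne_zero hB hpq hBpq hN hip hiq).2
  have key : (B p p - B q q) * (B j p * B i q) = 0 := by
    linear_combination -(B i q) * h₁ + B i p * h₂ - (B i i - B p p) * h₃
  exact sub_eq_zero.1 ((mul_eq_zero.1 key).resolve_right hne)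

theorem exists_sign : ∃ ε : ℝ, ε * ε = 1 ∧ ∀ k, k ≠ p → k ≠ q → B k q = ε * B k p := by
  have hip₀ := (h.apply_ne_zero hB hpq hBpq hN hip hiq).1
  have hjp₀ := (h.apply_ne_zero hB hpq hBpq hN hjp hjq).1
  have hprop : ∀ k, k ≠ p → k ≠ q → B k q = B i q / B i p * B k p := by
    intro k hkp hkq
    rcases eq_or_ne k i with rfl | hki
    · field_simp
    · have h' := h.quadruple k i p q hki hkp hkq hip hiq hpq
      field_simp
      linear_combination -h'
  refine ⟨B i q / B i p, ?_, hprop⟩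
  have hpp := h.apply_self_eq hB hpq hBpq hN hc hip hiq hjp hjq hij
  have h₅ : c * (B j p * B i p) = c * (B j q * B i q) := by
    linear_combination h.triple q i j hiq.symm hjq.symm hij - h.triple p i j hip.symm hjp.symm hij
      + c * B i j * hpp - c * B i p * hB.apply j p + c * B i q * hB.apply j q
  rw [hprop j hjp hjq] at h₅
  field_simp at h₅ ⊢
  linear_combination -h₅

end MobiusRelations
end

section
variable {ι : Type*} [Fintype ι] [DecidableEq ι]

theorem diagonal_mulVec_eq_smul_iff {d v : ι → ℝ} {ν : ℝ} :
    diagonal d *ᵥ v = ν • v ↔ ∀ k, v k ≠ 0 → d k = ν := by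
  simp only [funext_iff, mulVec_diagonal, Pi.smul_apply, smul_eq_mul]
  exact forall_congr' fun k => ⟨fun h hk => mul_right_cancel₀ hk h,
    fun h => (eq_or_ne (v k) 0).elim (fun hk => by rw [hk, mul_zero, mul_zero])
      (fun hk => by rw [h hk])⟩

theorem diagonal_mulVec_single_eq_smul (d : ι → ℝ) (a : ι) (x : ℝ) :
    diagonal d *ᵥ Pi.single a x = d a • Pi.single a x := by
  rw [diagonal_mulVec_single, ← smul_eq_mul, Pi.single_smul']

def IsCommonEigenvector (A : Matrix ι ι ℝ) (d v : ι → ℝ) : Prop :=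
  v ≠ 0 ∧ (∃ μ : ℝ, A *ᵥ v = μ • v) ∧ ∃ ν : ℝ, diagonal d *ᵥ v = ν • v

def HasPlanarCommonEigenvector (A : Matrix ι ι ℝ) (d : ι → ℝ) : Prop :=
  ∃ a b, a ≠ b ∧ ∃ x y : ℝ, IsCommonEigenvector A d (Pi.single a x + Pi.single b y)

theorem mulVec_single_add_single_apply (A : Matrix ι ι ℝ) (a b : ι) (x y : ℝ) (k : ι) :
    (A *ᵥ (Pi.single a x + Pi.single b y)) k = A k a * x + A k b * y := by
  simp [mulVec_add, mul_comm]

omit [Fintype ι] in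
theorem single_add_single_ne_zero {a b : ι} {x y : ℝ} (hab : a ≠ b) (hx : x ≠ 0) :
    (Pi.single a x + Pi.single b y : ι → ℝ) ≠ 0 := fun h => hx <| by
  simpa [hab.symm] using congrFun h a

theorem mulVec_single_add_single_eq_smul_iff {A : Matrix ι ι ℝ} {a b : ι} {x y μ : ℝ}
    (hab : a ≠ b) :
    A *ᵥ (Pi.single a x + Pi.single b y) = μ • (Pi.single a x + Pi.single b y) ↔
      A a a * x + A a b * y = μ * x ∧ A b a * x + A b b * y = μ * y ∧
        ∀ k, k ≠ a → k ≠ b → A k a * x + A k b * y = 0 := by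
  simp only [funext_iff, mulVec_single_add_single_apply, Pi.smul_apply, Pi.add_apply, smul_eq_mul]
  refine ⟨fun h => ⟨by simpa [hab.symm] using h a, by simpa [hab] using h b,
    fun k hka hkb => by simpa [hka, hkb] using h k⟩, fun ⟨ha, hb, hk⟩ k => ?_⟩
  rcases eq_or_ne k a with rfl | hka
  · simpa [hab.symm] using ha
  rcases eq_or_ne k b with rfl | hkb
  · simpa [hab] using hb
  simpa [hka, hkb] using hk k hka hkb

theorem diagonal_mulVec_single_add_single {d : ι → ℝ} {a b : ι} {x y : ℝ} (hd : d a = d b) :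
    diagonal d *ᵥ (Pi.single a x + Pi.single b y) = d a • (Pi.single a x + Pi.single b y) := by
  rw [diagonal_mulVec_eq_smul_iff]
  intro k hk
  rcases eq_or_ne k a with rfl | hka
  · rfl
  rcases eq_or_ne k b with rfl | hkb
  · exact hd.symm
  simp [hka, hkb] at hk

theorem hasPlanarCommonEigenvector_of_column_eq_zero [Nontrivial ι] {A : Matrix ι ι ℝ}
    (d : ι → ℝ) {a : ι} (ha : ∀ k, k ≠ a → A k a = 0) : HasPlanarCommonEigenvector A d := by
  obtain ⟨b, hba⟩ := exists_ne a
  refine ⟨a, b, hba.symm, 1, 0, single_add_single_ne_zero hba.symm one_ne_zero, ⟨A a a, ?_⟩, d a,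
    by rw [Pi.single_zero, add_zero, diagonal_mulVec_single_eq_smul]⟩
  funext k
  rcases eq_or_ne k a with rfl | hk
  · simp
  · simp [ha k hk, hk]
end

section
variable {ι : Type*} [Fintype ι] [DecidableEq ι] {c : ℝ} {B : Matrix ι ι ℝ} {d : ι → ℝ} {p q : ι}

theorem mul_self_apply_self_eq_of_sign (hB : B.IsSymm) (hBpq : B p q = 0) (hpp : B p p = B q q)
    {ε : ℝ} (hε : ε * ε = 1) (hsign : ∀ k, k ≠ p → k ≠ q → B k q = ε * B k p) :
    (B * B) p p = (B * B) q q := by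
  simp only [mul_apply]
  refine Fintype.sum_equiv (Equiv.swap p q) _ _ fun k => ?_
  rcases eq_or_ne k p with rfl | hkp
  · rw [Equiv.swap_apply_left, hpp]
  rcases eq_or_ne k q with rfl | hkq
  · rw [Equiv.swap_apply_right, mul_comm]
  rw [Equiv.swap_apply_of_ne_of_ne hkp hkq, hB.apply k p, hB.apply k q, hsign k hkp hkq]
  linear_combination (-(B k p * B k p)) * hε

namespace MobiusRelations
variable (h : MobiusRelations c B d) (hB : B.IsSymm) (hpq : p ≠ q) (hBpq : B p q = 0)
  (hN : (B * B) p q ≠ 0) (hc : c ≠ 0) {i j : ι} (hip : i ≠ p) (hiq : i ≠ q) (hjp : j ≠ p)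
  (hjq : j ≠ q) (hij : i ≠ j)
include h hB hpq hBpq hN hc hip hiq hjp hjq hij

theorem sub_mul_add_add_eq_zero {k : ι} (hkp : k ≠ p) (hkq : k ≠ q) :
    (d p - d q) * (c * d k + d p + d q) = 0 := by
  have hpp := h.apply_self_eq hB hpq hBpq hN hc hip hiq hjp hjq hij
  obtain ⟨ε, hε, hsign⟩ := h.exists_sign hB hpq hBpq hN hc hip hiq hjp hjq hij
  have hsq := mul_self_apply_self_eq_of_sign hB hBpq hpp hε hsign
  have hk : B p k * B k p = B q k * B k q := by
    rw [hB.apply k p, hB.apply k q, hsign k hkp hkq]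
    linear_combination (-(B k p * B k p)) * hε
  linear_combination h.pair q k hkq.symm - h.pair p k hkp.symm + c * B k k * hpp + hsq - c * hk

theorem hasPlanarCommonEigenvector_of_mul_self_apply_ne_zero :
    HasPlanarCommonEigenvector B d := by
  by_cases hd : d p = d q
  · obtain ⟨ε, hε, hsign⟩ := h.exists_sign hB hpq hBpq hN hc hip hiq hjp hjq hij
    have hpp := h.apply_self_eq hB hpq hBpq hN hc hip hiq hjp hjq hij
    refine ⟨p, q, hpq, 1, -ε, single_add_single_ne_zero hpq one_ne_zero, ⟨B p p, ?_⟩,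
      d p, diagonal_mulVec_single_add_single hd⟩
    refine (mulVec_single_add_single_eq_smul_iff hpq).2 ⟨?_, ?_, fun k hkp hkq => ?_⟩
    · linear_combination -ε * hBpq
    · linear_combination hB.apply p q + hBpq + ε * hpp
    · linear_combination -ε * hsign k hkp hkq - B k p * hε
  · have hdk : ∀ k, k ≠ p → k ≠ q → c * d k + d p + d q = 0 := fun k hkp hkq =>
      (mul_eq_zero.1 (h.sub_mul_add_add_eq_zero hB hpq hBpq hN hc hip hiq hjp hjq hij hkp hkq)
        ).resolve_left (sub_ne_zero.2 hd)
    have hdij : d i = d j :=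
      mul_left_cancel₀ hc (by linear_combination hdk i hip hiq - hdk j hjp hjq)
    refine ⟨i, j, hij, B j p, -B i p,
      single_add_single_ne_zero hij (h.apply_ne_zero hB hpq hBpq hN hjp hjq).1, ⟨B q q, ?_⟩,
      d i, diagonal_mulVec_single_add_single hdij⟩
    have hrow : ∀ {k l : ι}, k ≠ p → l ≠ p → l ≠ q → k ≠ l →
        B k l * B k p = (B k k - B q q) * B l p := h.apply_mul_apply_eq hB hpq hBpq hc
    refine (mulVec_single_add_single_eq_smul_iff hij).2 ⟨?_, ?_, fun k hki hkj => ?_⟩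
    · linear_combination -hrow hip hjp hjq hij
    · linear_combination hrow hjp hip hiq hij.symm
    rcases eq_or_ne k p with rfl | hkp
    · linear_combination B j k * hB.apply i k - B i k * hB.apply j k
    rcases eq_or_ne k q with rfl | hkq
    · linear_combination B j p * hB.apply i k - B i p * hB.apply j k
        - h.quadruple i j p k hij hip hiq hjp hjq hpq
    refine (mul_eq_zero.1 ?_).resolve_right (h.apply_ne_zero hB hpq hBpq hN hkp hkq).1
    linear_combination B j p * hrow hkp hip hiq hki - B i p * hrow hkp hjp hjq hkj

end MobiusRelations

theorem exists_ne_ne_of_four_le_card (hcard : 4 ≤ Fintype.card ι) (p q : ι) :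
    ∃ i j : ι, i ≠ p ∧ i ≠ q ∧ j ≠ p ∧ j ≠ q ∧ i ≠ j := by
  have h : 1 < ({p, q}ᶜ : Finset ι).card := by
    have := Finset.card_le_two (a := p) (b := q)
    rw [Finset.card_compl]
    omega
  obtain ⟨i, hi, j, hj, hij⟩ := Finset.one_lt_card.1 h
  simp only [Finset.mem_compl, Finset.mem_insert, Finset.mem_singleton, not_or] at hi hj
  exact ⟨i, j, hi.1, hi.2, hj.1, hj.2, hij⟩

theorem MobiusRelations.hasPlanarCommonEigenvector_of_apply_eq_zero (h : MobiusRelations c B d)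
    (hB : B.IsSymm) (hc : 2 ≤ c) (hpq : p ≠ q) (hBpq : B p q = 0) :
    HasPlanarCommonEigenvector B d := by
  have hc₀ : c ≠ 0 := (two_pos.trans_le hc).ne'
  by_cases hN : (B * B) p q = 0
  · have : Nontrivial ι := ⟨⟨p, q, hpq⟩⟩
    have hprod : ∀ i, i ≠ p → i ≠ q → B i p * B i q = 0 := fun i hip hiq =>
      (mul_eq_zero.1 ((h.mul_apply_eq_mul_self_apply hB hpq hBpq hip hiq).trans hN)).resolve_left
        hc₀
    by_cases hp : ∀ k, k ≠ p → B k p = 0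
    · exact hasPlanarCommonEigenvector_of_column_eq_zero d hp
    by_cases hq : ∀ k, k ≠ q → B k q = 0
    · exact hasPlanarCommonEigenvector_of_column_eq_zero d hq
    push Not at hp hq
    obtain ⟨r, hrp, hr⟩ := hp
    obtain ⟨t, htq, ht⟩ := hq
    have hrq : r ≠ q := by rintro rfl; exact hr ((hB.apply p r).trans hBpq)
    have htp : t ≠ p := by rintro rfl; exact ht hBpq
    have hrq₀ : B r q = 0 := (mul_eq_zero.1 (hprod r hrp hrq)).resolve_left hr
    have hrt : r ≠ t := by rintro rfl; exact ht hrq₀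
    have h' := h.quadruple r t p q hrt hrp hrq htp htq hpq
    rw [hrq₀, zero_mul] at h'
    exact absurd h' (mul_ne_zero hr ht)
  · have hcard : ((Fintype.card ι : ℝ) - 2 - c) * (B * B) p q = 0 := by
      linear_combination h.trace_relation hpq - c * trace B * hBpq
    have hcard' : 4 ≤ Fintype.card ι := by
      have := sub_eq_zero.1 ((mul_eq_zero.1 hcard).resolve_right hN)
      exact_mod_cast (by linarith : (4 : ℝ) ≤ Fintype.card ι)
    obtain ⟨i, j, hip, hiq, hjp, hjq, hij⟩ := exists_ne_ne_of_four_le_card hcard' p q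
    exact h.hasPlanarCommonEigenvector_of_mul_self_apply_ne_zero hB hpq hBpq hN hc₀
      hip hiq hjp hjq hij
end

section
variable {ι : Type*} [Fintype ι]

theorem Matrix.IsSymm.mul_mul_transpose_s2 {B : Matrix ι ι ℝ} (hB : B.IsSymm) (P : Matrix ι ι ℝ) :
    (P * B * Pᵀ).IsSymm := by
  simp only [IsSymm, transpose_mul, transpose_transpose, hB.eq, Matrix.mul_assoc]

variable [DecidableEq ι]

theorem mul_mul_transpose_apply_eq_zero {P M : Matrix ι ι ℝ} (hP : P * Pᵀ = 1) {j : ι} {μ : ℝ}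
    (hj : M *ᵥ P j = μ • P j) {i : ι} (hij : i ≠ j) : (P * M * Pᵀ) i j = 0 := by
  have hrow : (P * M * Pᵀ) i j = P i ⬝ᵥ (M *ᵥ P j) := by
    rw [Matrix.mul_assoc]
    simp only [mul_apply, mulVec, dotProduct, transpose_apply]
  have horth : P i ⬝ᵥ P j = 0 := by
    simpa [mul_apply, dotProduct, one_apply_ne hij] using congrFun (congrFun hP i) j
  rw [hrow, hj, dotProduct_smul, horth, smul_zero]

theorem exists_orthogonal_of_rows_eigenvectors {G B D : Matrix ι ι ℝ} (hG : G * Gᵀ = 1)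
    (hD : ∀ i, ∃ κ : ℝ, D *ᵥ G i = κ • G i) (hB : B.IsSymm) {a : ι} {μ : ℝ}
    (hBa : B *ᵥ G a = μ • G a) (k : ι) :
    ∃ P : Matrix ι ι ℝ, Pᵀ * P = 1 ∧ (P * D * Pᵀ).IsDiag ∧
      ∀ i, i ≠ k → (P * B * Pᵀ) i k = 0 ∧ (P * B * Pᵀ) k i = 0 := by
  set P := G.submatrix (Equiv.swap a k) id
  have hP : P * Pᵀ = 1 := by
    rw [transpose_submatrix, ← submatrix_mul _ _ _ _ _ Function.bijective_id, hG,
      submatrix_one_equiv]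
  refine ⟨P, mul_eq_one_comm.1 hP, fun i j hij => ?_, fun i hik => ?_⟩
  · obtain ⟨κ, hκ⟩ := hD (Equiv.swap a k j)
    exact mul_mul_transpose_apply_eq_zero hP hκ hij
  · have hPk : B *ᵥ P k = μ • P k := by
      change B *ᵥ G (Equiv.swap a k k) = μ • G (Equiv.swap a k k)
      rwa [Equiv.swap_apply_right]
    have hik' := mul_mul_transpose_apply_eq_zero hP hPk hik
    exact ⟨hik', ((hB.mul_mul_transpose_s2 P).apply i k).trans hik'⟩

omit [Fintype ι] in
def givensRotation (a b : ι) (cs sn : ℝ) : Matrix ι ι ℝ :=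
  of fun i => if i = a then Pi.single a cs + Pi.single b sn
    else if i = b then Pi.single a (-sn) + Pi.single b cs else Pi.single i 1

omit [Fintype ι] in
theorem givensRotation_row (a b : ι) (cs sn : ℝ) (i : ι) :
    givensRotation a b cs sn i = if i = a then Pi.single a cs + Pi.single b sn
      else if i = b then Pi.single a (-sn) + Pi.single b cs else Pi.single i 1 :=
  rfl

theorem givensRotation_mul_transpose {a b : ι} (hab : a ≠ b) {cs sn : ℝ}
    (h : cs ^ 2 + sn ^ 2 = 1) : givensRotation a b cs sn * (givensRotation a b cs sn)ᵀ = 1 := by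
  ext i j
  change givensRotation a b cs sn i ⬝ᵥ givensRotation a b cs sn j = (1 : Matrix ι ι ℝ) i j
  simp only [givensRotation_row, one_apply]
  split_ifs <;> subst_vars <;>
    simp_all [dotProduct_add, eq_comm] <;> linarith

theorem exists_diagonal_mulVec_single_add_single_eq_smul {d : ι → ℝ} {a b : ι} (hab : a ≠ b)
    {x y ν x' y' : ℝ}
    (h : diagonal d *ᵥ (Pi.single a x + Pi.single b y) = ν • (Pi.single a x + Pi.single b y))
    (hx' : y = 0 → x' = 0) (hy' : x = 0 → y' = 0) :
    ∃ κ : ℝ, diagonal d *ᵥ (Pi.single a x' + Pi.single b y') =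
      κ • (Pi.single a x' + Pi.single b y') := by
  rw [diagonal_mulVec_eq_smul_iff] at h
  rcases eq_or_ne x 0 with rfl | hx
  · exact ⟨d a, by rw [hy' rfl, Pi.single_zero, add_zero, diagonal_mulVec_single_eq_smul]⟩
  rcases eq_or_ne y 0 with rfl | hy
  · exact ⟨d b, by rw [hx' rfl, Pi.single_zero, zero_add, diagonal_mulVec_single_eq_smul]⟩
  have ha : d a = ν := h a (by simpa [hab.symm] using hx)
  have hb : d b = ν := h b (by simpa [hab] using hy)
  exact ⟨d a, diagonal_mulVec_single_add_single (ha.trans hb.symm)⟩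

theorem HasPlanarCommonEigenvector.exists_orthogonal {B : Matrix ι ι ℝ} {d : ι → ℝ}
    (h : HasPlanarCommonEigenvector B d) (hB : B.IsSymm) (k : ι) :
    ∃ P : Matrix ι ι ℝ, Pᵀ * P = 1 ∧ (P * diagonal d * Pᵀ).IsDiag ∧
      ∀ i, i ≠ k → (P * B * Pᵀ) i k = 0 ∧ (P * B * Pᵀ) k i = 0 := by
  obtain ⟨a, b, hab, x, y, hv, ⟨μ, hμ⟩, ν, hν⟩ := h
  have hxy : 0 < x ^ 2 + y ^ 2 := by
    have : x ≠ 0 ∨ y ≠ 0 := by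
      by_contra! hxy
      simp [hxy] at hv
    rcases this with h | h <;> positivity
  set r := √(x ^ 2 + y ^ 2)
  have hr : 0 < r := Real.sqrt_pos.2 hxy
  set G := givensRotation a b (x / r) (y / r) with hGdef
  have hG : G * Gᵀ = 1 := givensRotation_mul_transpose hab (by
    field_simp
    rw [Real.sq_sqrt hxy.le])
  have hGa : G a = r⁻¹ • (Pi.single a x + Pi.single b y) := by
    simp [G, givensRotation_row, smul_add, div_eq_inv_mul, ← Pi.single_smul', smul_eq_mul]
  have hBG : B *ᵥ G a = μ • G a := by rw [hGa, mulVec_smul, hμ, smul_comm]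
  have hdG : ∀ i, ∃ κ : ℝ, diagonal d *ᵥ G i = κ • G i := by
    intro i
    rcases eq_or_ne i a with rfl | hia
    · exact ⟨ν, by rw [hGa, mulVec_smul, hν, smul_comm]⟩
    rcases eq_or_ne i b with rfl | hib
    · rw [hGdef, givensRotation_row, if_neg hab.symm, if_pos rfl]
      exact exists_diagonal_mulVec_single_add_single_eq_smul hab hν (by simp +contextual)
        (by simp +contextual)
    · rw [hGdef, givensRotation_row, if_neg hia, if_neg hib]
      exact ⟨d i, diagonal_mulVec_single_eq_smul d i 1⟩
  exact exists_orthogonal_of_rows_eigenvectors hG hdG hB hBG k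
end

/-- Lemma 6.3: with `S = S̄`, `dim V = l`, `3 ≤ l ≤ n`, `n ≥ 4`, if `B̄` is
diagonal and `B_ij = 0` for some `i ≠ j`, then there is a new orthonormal basis
in which `B̄` is still diagonal and all off-diagonal entries of `B` in the last
row and last column vanish. -/
theorem stmt2 (n l : ℕ) (hn : 4 ≤ n)
    (B Bb : Matrix (Fin l) (Fin l) ℝ) (hB : B.IsSymm)
    (hS : ∀ i j k m, mobiusS n l B i j k m = mobiusS n l Bb i j k m)
    (hdiag : Bb.IsDiag)
    (hzero : ∃ i j : Fin l, i ≠ j ∧ B i j = 0) :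
    ∃ P : Matrix (Fin l) (Fin l) ℝ, Pᵀ * P = 1 ∧ (P * Bb * Pᵀ).IsDiag ∧
      ∀ i : Fin l, (i : ℕ) < l - 1 →
        (P * B * Pᵀ) i ⟨l - 1, by omega⟩ = 0 ∧
        (P * B * Pᵀ) ⟨l - 1, by omega⟩ i = 0 := by
  obtain ⟨p, q, hpq, hBpq⟩ := hzero
  have hc : (2 : ℝ) ≤ (n : ℝ) - 2 := by
    have : (4 : ℝ) ≤ n := by exact_mod_cast hn
    linarith
  rw [← hdiag.diagonal_diag] at hS ⊢
  have h := mobiusRelations_of_mobiusS_eq (by linarith) hS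
  have hl : l - 1 < l := Nat.sub_one_lt p.pos.ne'
  obtain ⟨P, hP, hPd, hPB⟩ :=
    (h.hasPlanarCommonEigenvector_of_apply_eq_zero hB hc hpq hBpq).exists_orthogonal hB ⟨l - 1, hl⟩
  exact ⟨P, hP, hPd, fun i hi => hPB i (Fin.ne_of_val_ne hi.ne)⟩
end
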